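/- arXiv:2003.13381 — 2 statements merged into one kernel-verified Lean document; each statement's English description precedes it below -/
import Mathlib

section
/- Let S = ⟨v₀,…,v_h⟩ be a numerical semigroup generated by a characteristic sequence. Then the conductor of S is an even number and the genus of S satisfies g(S) = c(S)/2 (i.e., exactly half of the integers in [0, c(S)−1] are gaps). -/
/-- A numerical semigroup: a subset of ℕ containing 0, closed under addition,
with finite complement. -/
def IsNumericalSemigroup (S : Set ℕ) : Prop :=
  0 ∈ S ∧ (∀ a ∈ S, ∀ b ∈ S, a + b ∈ S) ∧ Sᶜ.Finite

/-- Frobenius number, as an integer (so that F(ℕ) = -1). -/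
noncomputable def Frob (S : Set ℕ) : ℤ :=
  sSup (((fun n : ℕ => (n : ℤ)) '' Sᶜ) ∪ {-1})

/-- Submonoid of ℕ generated by a set. -/
def GenSg (A : Set ℕ) : Set ℕ := (AddSubmonoid.closure A : Set ℕ)

/-- The gluing S ⊕_{d,γ} ℕ = d·S + ℕ·γ. -/
def Gluing (S : Set ℕ) (d γ : ℕ) : Set ℕ :=
  {x | ∃ s ∈ S, ∃ k : ℕ, x = d * s + k * γ}

/-- e_k = gcd(v₀, …, v_k). -/
def ee (v : ℕ → ℕ) (k : ℕ) : ℕ := (Finset.range (k + 1)).gcd v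

/-- (v₀,…,v_h) is a characteristic sequence. -/
def IsCharSeq (h : ℕ) (v : ℕ → ℕ) : Prop :=
  (∀ i ≤ h, 0 < v i) ∧
  (∀ k, 1 ≤ k → k ≤ h → ee v k < ee v (k - 1)) ∧
  ee v h = 1 ∧
  ∀ k, 1 ≤ k → k + 1 ≤ h → ee v (k - 1) * v k < ee v k * v (k + 1)

/-- T is a GSI-semigroup: T = S ⊕_{d,γ} ℕ where S = ⟨A⟩ is a numerical
semigroup, d ≥ 2, gcd(d,γ)=1 and γ > max{d·F(S), d·(max A)}. -/
def IsGSI (T : Set ℕ) : Prop :=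
  ∃ (A : Finset ℕ) (d γ : ℕ), A.Nonempty ∧ 2 ≤ d ∧ Nat.Coprime d γ ∧
    IsNumericalSemigroup (GenSg ↑A) ∧
    (γ : ℤ) > d * Frob (GenSg ↑A) ∧ (∀ a ∈ A, d * a < γ) ∧
    T = Gluing (GenSg ↑A) d γ

/-!
Write `e_j = gcd(v₀, …, v_j)` and `S_j = ⟨v₀/e_j, …, v_j/e_j⟩`. Then `S_{j+1}` is the gluing
`d·S_j + ℕ·γ` with `d = e_j/e_{j+1}` and `γ = v_{j+1}/e_{j+1}` coprime, and the inequalities of a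
characteristic sequence give `γ > d·F(S_j)`. Under that condition gluing preserves symmetry
(`x ∈ S ↔ F - x ∉ S`), with new Frobenius number `d·F + (d-1)·γ`. Since `S_0 = ℕ` is symmetric and
`S_h = ⟨v₀, …, v_h⟩`, the semigroup is symmetric, and the reflection `x ↦ F - x` pairs the gaps
below the conductor `F + 1` with the elements below it.
-/

open Finset

/-- Symmetry of `S` with Frobenius number `F`, read in `ℤ`: negative integers count as
non-members, so `F = -1` describes `S = ℕ`. -/
def IsSymmetric (S : Set ℕ) (F : ℤ) : Prop :=
  ∀ x : ℤ, x ∈ ((↑) '' S : Set ℤ) ↔ F - x ∉ ((↑) '' S : Set ℤ)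

section Symmetric

variable {S : Set ℕ} {F : ℤ}

lemma natCast_mem_image_natCast_iff {n : ℕ} : (n : ℤ) ∈ ((↑) '' S : Set ℤ) ↔ n ∈ S :=
  Nat.cast_injective.mem_set_image

lemma nonneg_of_mem_image_natCast {x : ℤ} (hx : x ∈ ((↑) '' S : Set ℤ)) : 0 ≤ x := by
  obtain ⟨n, -, rfl⟩ := hx
  positivity

lemma isSymmetric_univ : IsSymmetric Set.univ (-1) := by
  intro x
  have hmem : ∀ y : ℤ, y ∈ ((↑) '' (Set.univ : Set ℕ) : Set ℤ) ↔ 0 ≤ y := fun y =>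
    ⟨nonneg_of_mem_image_natCast, fun hy => ⟨y.toNat, trivial, Int.toNat_of_nonneg hy⟩⟩
  rw [hmem, hmem]
  omega

namespace IsSymmetric

lemma neg_one_le (hS : IsSymmetric S F) : -1 ≤ F := by
  have hmem : F + 1 ∈ ((↑) '' S : Set ℤ) :=
    (hS _).2 fun h => by linarith [nonneg_of_mem_image_natCast h]
  linarith [nonneg_of_mem_image_natCast hmem]

lemma mem_of_lt (hS : IsSymmetric S F) {n : ℕ} (hn : F < n) : n ∈ S :=
  natCast_mem_image_natCast_iff.1 <| (hS n).2 fun h => by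
    linarith [nonneg_of_mem_image_natCast h]

lemma frob_eq (hS : IsSymmetric S F) (h0 : 0 ∈ S) : Frob S = F := by
  refine IsGreatest.csSup_eq ⟨?_, ?_⟩
  · rcases hS.neg_one_le.eq_or_lt with hF | hF
    · exact Or.inr hF.symm
    · have hFS : F ∉ ((↑) '' S : Set ℤ) := by
        simpa using (hS 0).1 (natCast_mem_image_natCast_iff.2 h0)
      lift F to ℕ using (by omega)
      exact Or.inl ⟨F, fun h => hFS (natCast_mem_image_natCast_iff.2 h), rfl⟩
  · rintro _ (⟨n, hn, rfl⟩ | rfl)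
    · exact not_lt.1 fun h => hn (hS.mem_of_lt h)
    · exact hS.neg_one_le

lemma two_mul_ncard_compl (hS : IsSymmetric S F) : 2 * (Sᶜ.ncard : ℤ) = F + 1 := by
  classical
  obtain ⟨c, hc⟩ : ∃ c : ℕ, (c : ℤ) = F + 1 := ⟨(F + 1).toNat, by have := hS.neg_one_le; omega⟩
  have hgaps : Sᶜ = ↑{n ∈ range c | n ∉ S} := by
    ext n
    simp only [Set.mem_compl_iff, coe_filter, mem_range, Set.mem_ofPred_eq]
    exact ⟨fun hn => ⟨not_le.1 fun h => hn (hS.mem_of_lt (by omega)), hn⟩, And.right⟩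
  have hreflect : ∀ n ∈ range c, c - 1 - n ∉ S ↔ n ∈ S := by
    intro n hn
    have hn : n < c := mem_range.1 hn
    rw [← natCast_mem_image_natCast_iff, ← natCast_mem_image_natCast_iff (n := n), hS n,
      show ((c - 1 - n : ℕ) : ℤ) = F - n by omega]
  have hcard : #{n ∈ range c | n ∉ S} = #{n ∈ range c | n ∈ S} := by
    rw [card_filter, card_filter, ← sum_range_reflect]
    exact sum_congr rfl fun n hn => if_congr (hreflect n hn) rfl rfl
  have hsplit := card_filter_add_card_filter_not (s := range c) (p := (· ∈ S))
  rw [card_range] at hsplit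
  rw [hgaps, Set.ncard_coe_finset]
  omega

end IsSymmetric

end Symmetric

section Gluing

variable {d γ : ℕ}

lemma exists_eq_mul_add_mul_of_coprime (hd : 0 < d) (hco : d.Coprime γ) (x : ℤ) :
    ∃ s : ℤ, ∃ k < d, x = d * s + k * γ := by
  obtain ⟨u, w, huw⟩ := Nat.Coprime.isCoprime hco
  have hr0 : 0 ≤ x * w % d := Int.emod_nonneg _ (by omega)
  have hrd : x * w % d < d := Int.emod_lt_of_pos _ (by omega)
  refine ⟨x * u + x * w / d * γ, (x * w % d).toNat, by omega, ?_⟩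
  rw [Int.toNat_of_nonneg hr0]
  linear_combination (-x) * huw - (γ : ℤ) * Int.mul_ediv_add_emod (x * w) d

lemma mem_gluing_iff {S : AddSubmonoid ℕ} (hco : d.Coprime γ) (hγ : γ ∈ S) {s : ℤ} {k : ℕ}
    (hk : k < d) :
    (d * s + k * γ : ℤ) ∈ ((↑) '' Gluing S d γ : Set ℤ) ↔ s ∈ ((↑) '' (S : Set ℕ) : Set ℤ) := by
  constructor
  · rintro ⟨_, ⟨s', hs', k', rfl⟩, heq⟩
    push_cast at heq
    obtain ⟨t, ht⟩ : (d : ℤ) ∣ k' - k :=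
      (Nat.Coprime.isCoprime hco).dvd_of_dvd_mul_right ⟨s - s', by linear_combination heq⟩
    -- `k' = k + d·t` with `0 ≤ k'` and `k < d` forces `t ≥ 0`; then `s = s' + t·γ`.
    have ht0 : 0 ≤ t := by nlinarith
    lift t to ℕ using ht0
    refine ⟨s' + t * γ, S.add_mem hs' (S.nsmul_mem hγ t), ?_⟩
    have hd : (0 : ℤ) < d := by omega
    push_cast
    nlinarith
  · rintro ⟨s', hs', rfl⟩
    exact ⟨d * s' + k * γ, ⟨s', hs', k, rfl⟩, by push_cast; ring⟩

/-- Each `x` is `d·s + k·γ` with `0 ≤ k < d`, and then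
`d·F + (d - 1)·γ - x = d·(F - s) + (d - 1 - k)·γ`, so by `mem_gluing_iff` the two memberships
reduce to those of `s` and `F - s` in `S`. -/
theorem IsSymmetric.gluing {S : AddSubmonoid ℕ} {F : ℤ} (hS : IsSymmetric S F) (hd : 0 < d)
    (hco : d.Coprime γ) (hγ : d * F < γ) :
    IsSymmetric (Gluing S d γ) (d * F + (d - 1) * γ) := by
  have hγS : γ ∈ S := hS.mem_of_lt (by nlinarith [hS.neg_one_le])
  intro x
  obtain ⟨s, k, hk, rfl⟩ := exists_eq_mul_add_mul_of_coprime hd hco x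
  have hdual : (d * F + (d - 1) * γ : ℤ) - (d * s + k * γ) =
      d * (F - s) + ((d - 1 - k : ℕ) : ℤ) * γ := by
    rw [Nat.cast_sub (by omega), Nat.cast_sub (by omega)]
    push_cast
    ring
  rw [hdual, mem_gluing_iff hco hγS hk, mem_gluing_iff hco hγS (by omega : d - 1 - k < d)]
  exact hS s

lemma gluing_genSg (A : Set ℕ) (d γ : ℕ) :
    Gluing (GenSg A) d γ = GenSg ((d * ·) '' A ∪ {γ}) := by
  ext x
  rw [GenSg, GenSg, AddSubmonoid.closure_union,
    show (d * ·) '' A = AddMonoidHom.mulLeft d '' A from rfl, ← AddMonoidHom.map_mclosure]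
  simp only [Gluing, Set.mem_ofPred_eq, SetLike.mem_coe, AddSubmonoid.mem_sup,
    AddSubmonoid.mem_map, AddSubmonoid.mem_closure_singleton, AddMonoidHom.coe_mulLeft,
    smul_eq_mul]
  constructor
  · rintro ⟨s, hs, k, rfl⟩
    exact ⟨d * s, ⟨s, hs, rfl⟩, k * γ, ⟨k, rfl⟩, rfl⟩
  · rintro ⟨_, ⟨s, hs, rfl⟩, _, ⟨k, rfl⟩, rfl⟩
    exact ⟨s, hs, k, rfl⟩

end Gluing

section CharSeq

variable {v : ℕ → ℕ}

lemma ee_succ (v : ℕ → ℕ) (j : ℕ) : ee v (j + 1) = Nat.gcd (v (j + 1)) (ee v j) := by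
  rw [ee, ee, range_add_one, gcd_insert]
  rfl

lemma ee_dvd {i j : ℕ} (hij : i ≤ j) : ee v j ∣ v i :=
  Finset.gcd_dvd (mem_range.2 (by omega))

lemma ee_pos (h0 : 0 < v 0) (j : ℕ) : 0 < ee v j :=
  Nat.pos_of_ne_zero fun he => h0.ne' (Finset.gcd_eq_zero_iff.1 he 0 (by simp))

lemma ee_succ_dvd (v : ℕ → ℕ) (j : ℕ) : ee v (j + 1) ∣ ee v j :=
  ee_succ v j ▸ Nat.gcd_dvd_right _ _

lemma coprime_ee_div_ee_succ (h0 : 0 < v 0) (j : ℕ) :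
    (ee v j / ee v (j + 1)).Coprime (v (j + 1) / ee v (j + 1)) := by
  have hg : Nat.gcd (ee v j) (v (j + 1)) = ee v (j + 1) := by rw [ee_succ, Nat.gcd_comm]
  rw [← hg]
  exact Nat.coprime_div_gcd_div_gcd (hg ▸ ee_pos h0 (j + 1))

def charSg (v : ℕ → ℕ) (j : ℕ) : Set ℕ := GenSg ((fun i => v i / ee v j) '' {i | i ≤ j})

lemma charSg_zero (h0 : 0 < v 0) : charSg v 0 = Set.univ := by
  have hunit : (fun i => v i / ee v 0) '' {i | i ≤ 0} = {1} := by
    simp [ee, Nat.div_self h0]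
  rw [charSg, hunit, GenSg, Set.eq_univ_iff_forall]
  exact fun n => AddSubmonoid.mem_closure_singleton.2 ⟨n, by simp⟩

lemma charSg_succ (h0 : 0 < v 0) (j : ℕ) :
    charSg v (j + 1) = Gluing (charSg v j) (ee v j / ee v (j + 1)) (v (j + 1) / ee v (j + 1)) := by
  have hscale : ∀ i ≤ j, v i / ee v (j + 1) = ee v j / ee v (j + 1) * (v i / ee v j) := by
    intro i hi
    rw [Nat.div_mul_div_comm (ee_succ_dvd v j) (ee_dvd hi), mul_comm (ee v j),
      Nat.mul_div_mul_right _ _ (ee_pos h0 j)]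
  have hindex : {i | i ≤ j + 1} = insert (j + 1) {i | i ≤ j} := by
    ext i
    simp only [Set.mem_ofPred_eq, Set.mem_insert_iff]
    omega
  rw [charSg, charSg, gluing_genSg, Set.union_singleton, hindex, Set.image_insert_eq,
    Set.image_image]
  congr 2
  exact Set.image_congr hscale

theorem IsCharSeq.exists_isSymmetric_charSg {h : ℕ} (hv : IsCharSeq h v) :
    ∀ j ≤ h, ∃ F : ℤ, IsSymmetric (charSg v j) F ∧ (j < h → ee v j * F < v (j + 1))
  | 0, _ => by
    have h0 : 0 < v 0 := hv.1 0 (Nat.zero_le h)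
    refine ⟨-1, charSg_zero h0 ▸ isSymmetric_univ, fun hpos => ?_⟩
    have h1 : 0 < v 1 := hv.1 1 hpos
    have he : 0 < ee v 0 := ee_pos h0 0
    nlinarith
  | j + 1, hj => by
    have h0 : 0 < v 0 := hv.1 0 (Nat.zero_le h)
    obtain ⟨F, hS, hbound⟩ := hv.exists_isSymmetric_charSg j (by omega)
    have hF : (ee v j : ℤ) * F < v (j + 1) := hbound (by omega)
    set e := ee v j
    set e' := ee v (j + 1)
    set d := e / e'
    set γ := v (j + 1) / e'
    have he' : 0 < e' := ee_pos h0 (j + 1)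
    have hde : (e : ℤ) = d * e' := by exact_mod_cast (Nat.div_mul_cancel (ee_succ_dvd v j)).symm
    have hγe : (v (j + 1) : ℤ) = γ * e' := by
      exact_mod_cast (Nat.div_mul_cancel (ee_dvd le_rfl)).symm
    have hd : 0 < d := Nat.div_pos (Nat.le_of_dvd (ee_pos h0 j) (ee_succ_dvd v j)) he'
    have hγ : (d : ℤ) * F < γ := by nlinarith
    refine ⟨d * F + (d - 1) * γ, charSg_succ h0 j ▸ hS.gluing hd (coprime_ee_div_ee_succ h0 j) hγ,
      fun hjh => ?_⟩
    -- `e'·F' = e·F + (d - 1)·v_{j+1} < d·v_{j+1}`, and `d·v_{j+1} < v_{j+2}` is the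
    -- characteristic inequality `e_j·v_{j+1} < e_{j+1}·v_{j+2}` divided by `e_{j+1}`.
    have hchar : (e' : ℤ) * (d * v (j + 1)) < e' * v (j + 1 + 1) := by
      have hineq : e * v (j + 1) < e' * v (j + 1 + 1) := by
        simpa using hv.2.2.2 (j + 1) (by omega) (by omega)
      have hineqZ : (e : ℤ) * v (j + 1) < e' * v (j + 1 + 1) := by exact_mod_cast hineq
      rw [hde] at hineqZ
      linarith
    calc (e' : ℤ) * (d * F + (d - 1) * γ) = e * F + (d - 1) * v (j + 1) := by
          rw [hde, hγe]; ring
      _ < v (j + 1) + (d - 1) * v (j + 1) := by linarith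
      _ = d * v (j + 1) := by ring
      _ < v (j + 1 + 1) := lt_of_mul_lt_mul_left hchar (by positivity)

end CharSeq

theorem conductor_even_genus_half (h : ℕ) (v : ℕ → ℕ) (hv : IsCharSeq h v) :
    Even (Frob (GenSg (v '' {i | i ≤ h})) + 1) ∧
    2 * ((GenSg (v '' {i | i ≤ h}))ᶜ.ncard : ℤ) =
      Frob (GenSg (v '' {i | i ≤ h})) + 1 := by
  obtain ⟨F, hS, -⟩ := hv.exists_isSymmetric_charSg h le_rfl
  have hSh : charSg v h = GenSg (v '' {i | i ≤ h}) := by simp only [charSg, hv.2.2.1, Nat.div_one]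
  rw [hSh] at hS
  rw [hS.frob_eq (AddSubmonoid.zero_mem _)]
  have hgenus := hS.two_mul_ncard_compl
  exact ⟨even_iff_two_dvd.2 ⟨_, hgenus.symm⟩, hgenus⟩
end

section
/- Let f be an even positive integer. If there exists a GSI-semigroup S ⊕_{d,γ} ℕ with Frobenius number f, then d is odd with d ≥ 3, F(S) is even with 2 ≤ F(S) ≤ ⌊(f−2)/9⌋, d ≤ ⌊(−1+√(4f·F(S)+4F(S)+1))/(2F(S))⌋, and γ = (f − d·F(S))/(d−1) is an integer coprime to d satisfying γ > max{d·F(S), d·M(S)}, where M(S) is the largest minimal generator of S. -/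
section Aux

variable {S : Set ℕ}

lemma frob_mem_aux (hfin : Sᶜ.Finite) :
    Frob S ∈ ((fun n : ℕ => (n : ℤ)) '' Sᶜ) ∪ {-1} :=
  Set.Nonempty.csSup_mem (Set.nonempty_of_mem (Set.mem_union_right _ rfl))
    ((hfin.image _).union (Set.finite_singleton _))

lemma le_frob_aux (hfin : Sᶜ.Finite) {n : ℕ} (hn : n ∉ S) : (n : ℤ) ≤ Frob S :=
  le_csSup ((hfin.image _).union (Set.finite_singleton _)).bddAbove
    (Set.mem_union_left _ ⟨n, hn, rfl⟩)

lemma neg_one_le_frob (hfin : Sᶜ.Finite) : -1 ≤ Frob S :=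
  le_csSup ((hfin.image _).union (Set.finite_singleton _)).bddAbove
    (Set.mem_union_right _ rfl)

lemma mem_of_frob_lt (hfin : Sᶜ.Finite) {n : ℕ} (h : Frob S < (n : ℤ)) : n ∈ S := by
  by_contra hn; exact absurd (le_frob_aux hfin hn) (not_le.mpr h)

lemma gluing_frob (S : Set ℕ) (hfin : Sᶜ.Finite) (h0 : 0 ∈ S) (d γ : ℕ)
    (hd : 2 ≤ d) (hco : Nat.Coprime d γ) (hγF : (γ : ℤ) > d * Frob S) :
    Frob (Gluing S d γ) = d * Frob S + ((d : ℤ) - 1) * γ := by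
  haveI : NeZero d := ⟨by omega⟩
  have hγ1 : 1 ≤ γ := by
    rcases Nat.eq_zero_or_pos γ with h | h
    · subst h; have := Nat.coprime_zero_right d |>.mp hco; omega
    · exact h
  have hdZ : (2 : ℤ) ≤ (d : ℤ) := by exact_mod_cast hd
  have hγZ : (1 : ℤ) ≤ (γ : ℤ) := by exact_mod_cast hγ1
  set F : ℤ := Frob S with hFdef
  have hF1 : -1 ≤ F := neg_one_le_frob hfin
  set N : ℤ := d * F + ((d : ℤ) - 1) * γ with hNdef
  have hN1 : -1 ≤ N := by nlinarith [mul_nonneg (by linarith : (0:ℤ) ≤ (d:ℤ)) (by linarith : (0:ℤ) ≤ F + 1), mul_nonneg (by linarith : (0:ℤ) ≤ (d:ℤ) - 1) (by linarith : (0:ℤ) ≤ (γ:ℤ) - 1)]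
  -- Step A : everything above N is in the gluing
  have memA : ∀ n : ℕ, N < (n : ℤ) → n ∈ Gluing S d γ := by
    intro n hn
    have hu : IsUnit ((γ : ℕ) : ZMod d) := (ZMod.isUnit_iff_coprime γ d).mpr hco.symm
    set k : ℕ := ((n : ZMod d) * ((γ : ℕ) : ZMod d)⁻¹).val with hk
    have hkd : k < d := ZMod.val_lt _
    have hcast : ((k : ZMod d)) * ((γ : ℕ) : ZMod d) = (n : ZMod d) := by
      rw [hk, ZMod.natCast_val, ZMod.cast_id, mul_assoc,
        ZMod.inv_mul_of_unit _ hu, mul_one]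
    have hdvd : (d : ℤ) ∣ (n : ℤ) - (k : ℤ) * γ := by
      have h0' : (((n : ℤ) - (k : ℤ) * γ : ℤ) : ZMod d) = 0 := by
        push_cast
        rw [hcast]; ring
      exact (ZMod.intCast_zmod_eq_zero_iff_dvd _ d).mp h0'
    obtain ⟨m, hm⟩ := hdvd
    have hkγ : (k : ℤ) * γ ≤ ((d : ℤ) - 1) * γ := by
      have : (k : ℤ) ≤ (d : ℤ) - 1 := by omega
      exact mul_le_mul_of_nonneg_right this (by linarith)
    have hmF : F < m := by
      have hlt : (d : ℤ) * F < (d : ℤ) * m := by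
        have : (d : ℤ) * m = (n : ℤ) - (k : ℤ) * γ := hm.symm
        nlinarith
      exact lt_of_mul_lt_mul_left hlt (by linarith)
    have hm0 : 0 ≤ m := by linarith
    have hms : m.toNat ∈ S := mem_of_frob_lt hfin (by rw [Int.toNat_of_nonneg hm0]; exact hmF)
    refine ⟨m.toNat, hms, k, ?_⟩
    have : (n : ℤ) = d * m.toNat + k * γ := by
      rw [Int.toNat_of_nonneg hm0]; linarith
    exact_mod_cast this
  -- Step B : N is not in the gluing
  have key : ∀ s : ℕ, s ∈ S → ∀ k : ℕ, N ≠ (d : ℤ) * s + k * γ := by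
    intro s hs k heq
    have h1 : (d : ℤ) * (F - s) = ((k : ℤ) - ((d : ℤ) - 1)) * γ := by
      rw [hNdef] at heq; ring_nf; ring_nf at heq; linarith
    have hcoZ : IsCoprime (d : ℤ) (γ : ℤ) := Nat.isCoprime_iff_coprime.mpr hco
    have hdk : (d : ℤ) ∣ (k : ℤ) - ((d : ℤ) - 1) :=
      hcoZ.dvd_of_dvd_mul_right ⟨F - s, h1.symm⟩
    have hdk1 : (d : ℤ) ∣ (k : ℤ) + 1 := by
      have := dvd_add hdk (dvd_refl (d : ℤ))
      have he : (k : ℤ) - ((d : ℤ) - 1) + d = (k : ℤ) + 1 := by ring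
      rwa [he] at this
    obtain ⟨j, hj⟩ := hdk1
    have hk0 : (0 : ℤ) ≤ (k : ℤ) := Int.natCast_nonneg k
    have hj1 : 1 ≤ j := by nlinarith
    rcases eq_or_lt_of_le hj1 with hj2 | hj2
    · -- k = d - 1, so F = s ∈ S : contradiction
      have hkval : (k : ℤ) = (d : ℤ) - 1 := by rw [← hj2] at hj; omega
      have hFs : F = (s : ℤ) := by
        have : (d : ℤ) * (F - s) = 0 := by rw [h1, hkval]; ring
        have := mul_eq_zero.mp this
        rcases this with h | h
        · omega
        · linarith
      rcases frob_mem_aux hfin with ⟨m, hmS, hms⟩ | hneg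
      · have hms' : (m : ℤ) = F := hms
        have : m = s := by omega
        exact hmS (this ▸ hs)
      · have hneg' : F = -1 := hneg
        omega
    · -- k ≥ 2d - 1 : impossible
      have hk2 : 2 * (d : ℤ) - 1 ≤ (k : ℤ) := by nlinarith
      have hs0 : (0 : ℤ) ≤ (s : ℤ) := Int.natCast_nonneg s
      have hds : (d : ℤ) * s ≤ d * F - d * γ := by nlinarith
      have hFγ : F < γ := by
        rcases le_or_gt F 0 with h | h
        · linarith
        · nlinarith
      nlinarith
  -- Combine
  have hTub : ∀ x ∈ ((fun n : ℕ => (n : ℤ)) '' (Gluing S d γ)ᶜ) ∪ {-1}, x ≤ N := by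
    rintro x (⟨n, hn, rfl⟩ | rfl)
    · by_contra h
      push_neg at h
      exact hn (memA n h)
    · exact hN1
  have hbdd : BddAbove (((fun n : ℕ => (n : ℤ)) '' (Gluing S d γ)ᶜ) ∪ {-1}) := ⟨N, hTub⟩
  have hle : Frob (Gluing S d γ) ≤ N := csSup_le ⟨-1, Set.mem_union_right _ rfl⟩ hTub
  have hge : N ≤ Frob (Gluing S d γ) := by
    rcases lt_or_ge N 0 with h | h
    · have hN : N = -1 := by omega
      rw [hN]
      exact le_csSup hbdd (Set.mem_union_right _ rfl)
    · have hnot : N.toNat ∉ Gluing S d γ := by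
        rintro ⟨s, hs, k, hk⟩
        apply key s hs k
        have : (N.toNat : ℤ) = (d : ℤ) * s + k * γ := by exact_mod_cast congrArg (Nat.cast : ℕ → ℤ) hk
        rwa [Int.toNat_of_nonneg h] at this
      have : (N.toNat : ℤ) ≤ Frob (Gluing S d γ) :=
        le_csSup hbdd (Set.mem_union_left _ ⟨N.toNat, hnot, rfl⟩)
      rwa [Int.toNat_of_nonneg h] at this
  linarith

end Aux

theorem even_frobenius_GSI_constraints (f : ℕ) (hf : Even f) (hpos : 0 < f)
    (A : Finset ℕ) (hA : A.Nonempty) (d γ : ℕ) (hd : 2 ≤ d)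
    (hco : Nat.Coprime d γ) (hS : IsNumericalSemigroup (GenSg ↑A))
    (hmin : ∀ B ⊂ (↑A : Set ℕ), GenSg B ≠ GenSg ↑A)
    (hγF : (γ : ℤ) > d * Frob (GenSg ↑A)) (hγA : ∀ a ∈ A, d * a < γ)
    (hFrob : Frob (Gluing (GenSg ↑A) d γ) = (f : ℤ)) :
    Odd d ∧ 3 ≤ d ∧ Even (Frob (GenSg ↑A)) ∧ 2 ≤ Frob (GenSg ↑A) ∧
    Frob (GenSg ↑A) ≤ ((f : ℤ) - 2) / 9 ∧
    (d : ℤ) ≤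
      ⌊(-1 + Real.sqrt (4 * f * (Frob (GenSg ↑A) : ℝ) +
          4 * (Frob (GenSg ↑A) : ℝ) + 1)) / (2 * (Frob (GenSg ↑A) : ℝ))⌋ ∧
    ((d : ℤ) - 1) * γ = (f : ℤ) - d * Frob (GenSg ↑A) ∧
    Nat.Coprime γ d ∧
    (γ : ℤ) > d * Frob (GenSg ↑A) ∧ (∀ a ∈ A, d * a < γ) := by
  obtain ⟨h0, hadd, hfin⟩ := hS
  have hγ1 : 1 ≤ γ := by
    rcases Nat.eq_zero_or_pos γ with h | h
    · subst h; have := Nat.coprime_zero_right d |>.mp hco; omega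
    · exact h
  set F : ℤ := Frob (GenSg (↑A : Set ℕ)) with hFdef
  have hglue : (f : ℤ) = d * F + ((d : ℤ) - 1) * γ := by
    rw [← hFrob, gluing_frob _ hfin h0 d γ hd hco hγF]
  have hdZ : (2 : ℤ) ≤ (d : ℤ) := by exact_mod_cast hd
  have hγZ : (1 : ℤ) ≤ (γ : ℤ) := by exact_mod_cast hγ1
  have hfeZ : Even (f : ℤ) := Int.even_coe_nat f |>.mpr hf
  -- d is odd
  have hdodd : Odd d := by
    by_contra hde
    rw [Nat.not_odd_iff_even] at hde
    have hγodd : Odd γ := by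
      rcases Nat.even_or_odd γ with hγe | hγo
      · exfalso
        have h2d : 2 ∣ d := hde.two_dvd
        have h2γ : 2 ∣ γ := hγe.two_dvd
        have := Nat.dvd_gcd h2d h2γ
        rw [hco] at this
        omega
      · exact hγo
    have h1 : Even ((d : ℤ) * F) := (Int.even_coe_nat d |>.mpr hde).mul_right _
    have h2 : Odd (((d : ℤ) - 1) * γ) := by
      have hd1 : Odd ((d : ℤ) - 1) := (Int.even_coe_nat d |>.mpr hde).sub_odd odd_one
      exact hd1.mul (Int.odd_coe_nat γ |>.mpr hγodd)
    have : Odd (f : ℤ) := hglue ▸ h1.add_odd h2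
    exact (Int.not_odd_iff_even.mpr hfeZ) this
  have hdoddZ : Odd (d : ℤ) := Int.odd_coe_nat d |>.mpr hdodd
  have hd3 : 3 ≤ d := by
    rcases hdodd with ⟨e, he⟩; omega
  -- F is even
  have hFeven : Even F := by
    have h2 : Even (((d : ℤ) - 1) * γ) := by
      have : Even ((d : ℤ) - 1) := by
        rcases hdoddZ with ⟨e, he⟩; exact ⟨e, by omega⟩
      exact this.mul_right _
    have h1 : Even ((d : ℤ) * F) := by
      have := hfeZ.sub h2
      rw [hglue, add_sub_cancel_right] at this
      exact this
    rcases Int.even_mul.mp h1 with h | h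
    · exact absurd hdoddZ (Int.not_odd_iff_even.mpr h)
    · exact h
  -- F ≥ 2
  have hF2 : 2 ≤ F := by
    rcases frob_mem_aux hfin with ⟨n, hnS, hn⟩ | hneg
    · have hn0 : n ≠ 0 := fun h => hnS (h ▸ h0)
      have hn' : (n : ℤ) = F := hn
      have hF1 : 1 ≤ F := by omega
      rcases hFeven with ⟨c, hc⟩
      omega
    · have hne : F = -1 := hneg
      rcases hFeven with ⟨c, hc⟩
      omega
  -- f ≥ d^2 F + d - 1
  have hγge : (d : ℤ) * F + 1 ≤ (γ : ℤ) := by exact hγF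
  have hfge : (d : ℤ) * d * F + (d : ℤ) - 1 ≤ (f : ℤ) := by
    nlinarith [mul_le_mul_of_nonneg_left hγge (by linarith : (0:ℤ) ≤ (d:ℤ) - 1)]
  have hd3Z : (3 : ℤ) ≤ (d : ℤ) := by exact_mod_cast hd3
  have h9 : 9 * F + 2 ≤ (f : ℤ) := by nlinarith
  refine ⟨hdodd, hd3, hFeven, hF2, by omega, ?_, by linarith, hco.symm, hγF, hγA⟩
  -- the floor bound
  rw [Int.le_floor]
  have hFR : (2 : ℝ) ≤ (F : ℝ) := by exact_mod_cast hF2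
  have hdR : (3 : ℝ) ≤ (d : ℝ) := by exact_mod_cast hd3
  rw [le_div_iff₀ (by linarith : (0:ℝ) < 2 * (F : ℝ))]
  have harg : (0 : ℝ) ≤ 4 * (f : ℝ) * (F : ℝ) + 4 * (F : ℝ) + 1 := by positivity
  have hsq : 2 * (F : ℝ) * (d : ℝ) + 1 ≤
      Real.sqrt (4 * (f : ℝ) * (F : ℝ) + 4 * (F : ℝ) + 1) := by
    rw [Real.le_sqrt (by nlinarith) harg]
    have hfgeR : (d : ℝ) * (d : ℝ) * (F : ℝ) + (d : ℝ) - 1 ≤ (f : ℝ) := by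
      exact_mod_cast hfge
    nlinarith
  push_cast
  nlinarith [hsq]
end
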